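/- Let g = ḡ + Δg where ḡ is the mini-batch mean of per-sample gradients over a uniformly random size-B subset of N vectors with population mean μ and per-sample variance constant H, and Δg satisfies E[Δg | ḡ] = 0 with Δg = (1/B)·concatenation of vec(ΔG^l), ΔG^l = (G^l)ᵀΔX^l. Then Var(g) ≤ H(N−B)/(BN) + (1/B²) Σ_l E‖(G^l)ᵀ ΔX^l‖_F². -/

import Mathlib

open MeasureTheory Matrix

/-- Squared Frobenius norm of a real matrix. -/
def frobSq {m n : ℕ} (A : Matrix (Fin m) (Fin n) ℝ) : ℝ :=
  ∑ i, ∑ j, (A i j) ^ 2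

section Aux

open Finset

lemma card_powersetCard_filter_subset {α : Type*} [DecidableEq α] (u t : Finset α) (B : ℕ)
    (htu : t ⊆ u) (htB : t.card ≤ B) :
    ((Finset.powersetCard B u).filter (fun s => t ⊆ s)).card
      = (u.card - t.card).choose (B - t.card) := by
  rw [← Finset.card_sdiff_of_subset htu, ← Finset.card_powersetCard]
  apply Finset.card_bij' (fun s _ => s \ t) (fun r _ => r ∪ t)
  · intro s hs
    rw [Finset.mem_filter, Finset.mem_powersetCard] at hs
    obtain ⟨⟨hsu, hsc⟩, hts⟩ := hs
    rw [Finset.mem_powersetCard]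
    exact ⟨Finset.sdiff_subset_sdiff hsu (le_refl t), by rw [Finset.card_sdiff_of_subset hts, hsc]⟩
  · intro r hr
    rw [Finset.mem_powersetCard] at hr
    obtain ⟨hru, hrc⟩ := hr
    have hdisj : Disjoint r t := by
      refine Finset.disjoint_left.2 fun a har hat => ?_
      exact (Finset.mem_sdiff.1 (hru har)).2 hat
    rw [Finset.mem_filter, Finset.mem_powersetCard]
    refine ⟨⟨Finset.union_subset (hru.trans Finset.sdiff_subset) htu, ?_⟩,
      Finset.subset_union_right⟩
    rw [Finset.card_union_of_disjoint hdisj, hrc, Nat.sub_add_cancel htB]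
  · intro s hs
    rw [Finset.mem_filter] at hs
    exact Finset.sdiff_union_of_subset hs.2
  · intro r hr
    rw [Finset.mem_powersetCard] at hr
    have hdisj : Disjoint r t := by
      refine Finset.disjoint_left.2 fun a har hat => ?_
      exact (Finset.mem_sdiff.1 (hr.1 har)).2 hat
    rw [Finset.union_sdiff_right, Finset.sdiff_eq_self_of_disjoint hdisj]

lemma integral_comp_fiber {Ω : Type*} [MeasurableSpace Ω] (μ : Measure Ω) [IsFiniteMeasure μ]
    {ι : Type*} [Fintype ι] [DecidableEq ι] (S : Ω → ι)
    (hmeas : ∀ s, MeasurableSet {ω | S ω = s})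
    {E : Type*} [NormedAddCommGroup E] [NormedSpace ℝ E] [CompleteSpace E] (f : ι → E) :
    ∫ ω, f (S ω) ∂μ = ∑ s, (μ {ω | S ω = s}).toReal • f s := by
  have h : (fun ω => f (S ω))
      = fun ω => ∑ s, Set.indicator {ω' | S ω' = s} (fun _ => f s) ω := by
    funext ω
    rw [Finset.sum_eq_single_of_mem (S ω) (Finset.mem_univ _)]
    · exact (Set.indicator_of_mem rfl _).symm
    · intro b _ hb
      exact Set.indicator_of_notMem (fun h => hb (h.symm)) _
  rw [h, integral_finset_sum]
  · exact Finset.sum_congr rfl fun s _ => integral_indicator_const _ (hmeas s)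
  · intro s _
    exact (integrable_const _).indicator (hmeas s)

lemma nat_id1 (N B : ℕ) (hB : 1 ≤ B) (hBN : B ≤ N) :
    (N - 1).choose (B - 1) * N = N.choose B * B := by
  rcases Nat.exists_eq_succ_of_ne_zero (show N ≠ 0 by omega) with ⟨n, rfl⟩
  rcases Nat.exists_eq_succ_of_ne_zero (show B ≠ 0 by omega) with ⟨b, rfl⟩
  simp only [Nat.succ_sub_one]
  rw [mul_comm]
  exact Nat.add_one_mul_choose_eq n b

lemma nat_id2 (N B : ℕ) (hB2 : 2 ≤ B) (hBN : B ≤ N) :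
    (N - 2).choose (B - 2) * (N * (N - 1)) = N.choose B * (B * (B - 1)) := by
  obtain ⟨n, rfl⟩ : ∃ n, N = n + 2 := ⟨N - 2, by omega⟩
  obtain ⟨b, rfl⟩ : ∃ b, B = b + 2 := ⟨B - 2, by omega⟩
  have h1 := Nat.add_one_mul_choose_eq n b
  have h2 := Nat.add_one_mul_choose_eq (n + 1) (b + 1)
  have e1 : n + 2 - 2 = n := by omega
  have e2 : n + 2 - 1 = n + 1 := by omega
  have e3 : b + 2 - 2 = b := by omega
  have e4 : b + 2 - 1 = b + 1 := by omega
  rw [e1, e2, e3, e4]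
  calc n.choose b * ((n + 2) * (n + 1))
      = (n + 2) * ((n + 1) * n.choose b) := by ring
    _ = (n + 2) * ((n + 1).choose (b + 1) * (b + 1)) := by rw [h1]
    _ = (b + 1) * ((n + 2) * ((n + 1).choose (b + 1))) := by ring
    _ = (b + 1) * ((n + 2).choose (b + 2) * (b + 2)) := by rw [h2]
    _ = (n + 2).choose (b + 2) * ((b + 2) * (b + 1)) := by ring

end Aux
open Finset RealInnerProductSpace in
set_option maxHeartbeats 1000000 in
/-- Theorem 3.3: the variance of the mini-batch gradient with unbiased
linear-layer activation compression is bounded by the sampling term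
`H(N−B)/(BN)` plus the compression term `(1/B²) Σ_l E‖(Gˡ)ᵀ ΔXˡ‖_F²`.
Here `ḡ` is the mean over a uniformly random size-`B` subset `S` of the
per-sample gradients `x i`, `Δg` is the concatenation of the scaled
vectorized perturbations `(1/B)(Gˡ)ᵀΔXˡ`, conditionally mean-zero given
`ḡ`, and `g = ḡ + Δg`. -/
theorem total_variance_bound {Ω : Type*} [MeasurableSpace Ω]
    (μ : Measure Ω) [IsProbabilityMeasure μ]
    (N B : ℕ) (hB : 1 ≤ B) (hBN : B ≤ N) (hN : 2 ≤ N)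
    {L : ℕ} (mdim ndim ddim : Fin L → ℕ)
    (x : Fin N → EuclideanSpace ℝ (Σ l : Fin L, Fin (ndim l) × Fin (ddim l)))
    (S : Ω → Finset (Fin N))
    (hScard : ∀ ω, (S ω).card = B)
    (hSmeas : ∀ s : Finset (Fin N), MeasurableSet {ω | S ω = s})
    (hSunif : ∀ s ∈ Finset.powersetCard B (Finset.univ : Finset (Fin N)),
      μ {ω | S ω = s} = 1 / (N.choose B))
    (G : (l : Fin L) → Ω → Matrix (Fin (mdim l)) (Fin (ndim l)) ℝ)
    (ΔX : (l : Fin L) → Ω → Matrix (Fin (mdim l)) (Fin (ddim l)) ℝ)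
    (gbar Δg g : Ω → EuclideanSpace ℝ (Σ l : Fin L, Fin (ndim l) × Fin (ddim l)))
    (hgbar : ∀ ω, gbar ω = ((B : ℝ))⁻¹ • ∑ i ∈ S ω, x i)
    (hΔg : ∀ ω (l : Fin L) (i : Fin (ndim l)) (j : Fin (ddim l)),
      Δg ω ⟨l, (i, j)⟩ = ((B : ℝ))⁻¹ * ((G l ω)ᵀ * ΔX l ω) i j)
    (hg : ∀ ω, g ω = gbar ω + Δg ω)
    (hgbar2 : MemLp gbar 2 μ) (hΔg2 : MemLp Δg 2 μ)
    (hcond : μ[Δg | MeasurableSpace.comap gbar inferInstance] =ᵐ[μ] 0)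
    (hintl : ∀ l, Integrable (fun ω => frobSq ((G l ω)ᵀ * ΔX l ω)) μ)
    (μpop : EuclideanSpace ℝ (Σ l : Fin L, Fin (ndim l) × Fin (ddim l)))
    (hμpop : μpop = ((N : ℝ))⁻¹ • ∑ i, x i)
    (H : ℝ) (hH : H = ((N : ℝ) - 1)⁻¹ * ∑ i, ‖x i - μpop‖ ^ 2) :
    (∫ ω, ‖g ω‖ ^ 2 ∂μ) - ‖∫ ω, g ω ∂μ‖ ^ 2
      ≤ H * ((N : ℝ) - B) / (B * N)
        + (1 / (B : ℝ) ^ 2) * ∑ l, ∫ ω, frobSq ((G l ω)ᵀ * ΔX l ω) ∂μ := by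
  classical
  have hB0 : (B : ℝ) ≠ 0 := Nat.cast_ne_zero.2 (by omega)
  have hN0 : (N : ℝ) ≠ 0 := Nat.cast_ne_zero.2 (by omega)
  have hN2 : (2 : ℝ) ≤ (N : ℝ) := by exact_mod_cast hN
  have hN1 : (N : ℝ) - 1 ≠ 0 := by linarith
  have hC0 : ((N.choose B : ℕ) : ℝ) ≠ 0 := Nat.cast_ne_zero.2 (Nat.choose_pos hBN).ne'
  set P := Finset.powersetCard B (Finset.univ : Finset (Fin N)) with hP
  set c₁ := (N - 1).choose (B - 1) with hc₁
  set c₂ := if 2 ≤ B then (N - 2).choose (B - 2) else 0 with hc₂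
  -- counting
  have hcount1 : ∀ i : Fin N, (P.filter (fun s => i ∈ s)).card = c₁ := by
    intro i
    have h := card_powersetCard_filter_subset (Finset.univ : Finset (Fin N)) {i} B
      (Finset.subset_univ _) (by simpa using hB)
    simp only [Finset.card_singleton, Finset.card_univ, Fintype.card_fin] at h
    have hpred : P.filter (fun s => i ∈ s) = P.filter (fun s => {i} ⊆ s) := by
      apply Finset.filter_congr
      intro s _
      simp
    rw [hpred, hP, h]
  have hcount2 : ∀ i j : Fin N, i ≠ j →
      (P.filter (fun s => i ∈ s ∧ j ∈ s)).card = c₂ := by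
    intro i j hij
    by_cases h2 : 2 ≤ B
    · have h := card_powersetCard_filter_subset (Finset.univ : Finset (Fin N)) {i, j} B
        (Finset.subset_univ _) (by rw [Finset.card_pair hij]; exact h2)
      simp only [Finset.card_pair hij, Finset.card_univ, Fintype.card_fin] at h
      have hpred : P.filter (fun s => i ∈ s ∧ j ∈ s) = P.filter (fun s => {i, j} ⊆ s) := by
        apply Finset.filter_congr
        intro s _
        simp [Finset.insert_subset_iff]
      rw [hpred, hP, h, hc₂, if_pos h2]
    · have hB1 : B = 1 := by omega
      rw [hc₂, if_neg h2]
      rw [Finset.card_eq_zero, Finset.filter_eq_empty_iff]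
      intro s hs
      rw [hP, Finset.mem_powersetCard_univ, hB1, Finset.card_eq_one] at hs
      obtain ⟨a, rfl⟩ := hs
      rintro ⟨hi, hj⟩
      simp only [Finset.mem_singleton] at hi hj
      exact hij (hi.trans hj.symm)
  have hnat1 : c₁ * N = N.choose B * B := nat_id1 N B hB hBN
  have hnat2 : c₂ * (N * (N - 1)) = N.choose B * (B * (B - 1)) := by
    by_cases h2 : 2 ≤ B
    · rw [hc₂, if_pos h2]; exact nat_id2 N B h2 hBN
    · have hB1 : B = 1 := by omega
      rw [hc₂, if_neg h2, hB1]
      simp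
  have hc1R : (c₁ : ℝ) = (B : ℝ) * (N.choose B : ℝ) / N := by
    rw [eq_div_iff hN0]
    have h : (c₁ : ℝ) * N = (N.choose B : ℝ) * B := by exact_mod_cast hnat1
    linear_combination h
  have hc2R : (c₂ : ℝ) = (B : ℝ) * ((B : ℝ) - 1) * (N.choose B : ℝ) / ((N : ℝ) * ((N : ℝ) - 1)) := by
    rw [eq_div_iff (mul_ne_zero hN0 hN1)]
    have h0 := congrArg (fun k : ℕ => (k : ℝ)) hnat2
    push_cast [Nat.cast_sub (show 1 ≤ N by omega), Nat.cast_sub hB] at h0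
    linear_combination h0
  -- measurability of gbar
  letI : MeasurableSpace (Finset (Fin N)) := ⊤
  have hSm : Measurable S := measurable_to_countable' (fun s => hSmeas s)
  have hgm : Measurable gbar := by
    have hfe : gbar = (fun s : Finset (Fin N) => (B : ℝ)⁻¹ • ∑ i ∈ s, x i) ∘ S := funext hgbar
    rw [hfe]
    exact measurable_from_top.comp hSm
  have hm : MeasurableSpace.comap gbar inferInstance ≤ _ := hgm.comap_le
  have hΔInt : Integrable Δg μ := hΔg2.integrable one_le_two
  have hgbarInt : Integrable gbar μ := hgbar2.integrable one_le_two
  -- zero mean of Δg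
  have hΔzero : ∫ ω, Δg ω ∂μ = 0 := by
    rw [← integral_condExp hm (f := Δg), integral_congr_ae hcond]
    simp
  -- cross term vanishes
  have hms : ∀ v, MeasurableSet[MeasurableSpace.comap gbar inferInstance] {ω | gbar ω = v} := by
    intro v
    refine ⟨{v}, measurableSet_singleton v, ?_⟩
    ext ω
    simp
  have hcross : ∫ ω, ⟪gbar ω, Δg ω⟫ ∂μ = 0 := by
    set V := P.image (fun s => (B : ℝ)⁻¹ • ∑ i ∈ s, x i) with hV
    have hmem : ∀ ω, gbar ω ∈ V := fun ω => by
      rw [hgbar ω]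
      exact Finset.mem_image_of_mem _ (Finset.mem_powersetCard_univ.2 (hScard ω))
    have hrep : (fun ω => ⟪gbar ω, Δg ω⟫)
        = fun ω => ∑ v ∈ V, Set.indicator {ω' | gbar ω' = v} (fun ω' => ⟪v, Δg ω'⟫) ω := by
      funext ω
      rw [Finset.sum_eq_single_of_mem (gbar ω) (hmem ω)]
      · exact (Set.indicator_of_mem (show ω ∈ {ω' | gbar ω' = gbar ω} from rfl)
          (fun ω' => ⟪gbar ω, Δg ω'⟫)).symm
      · intro b _ hb
        refine Set.indicator_of_notMem ?_ _
        exact fun h => hb (Eq.symm h)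
    rw [hrep, integral_finset_sum]
    · refine Finset.sum_eq_zero fun v _ => ?_
      rw [integral_indicator (hm _ (hms v)), integral_inner hΔInt.restrict v]
      have h0 : ∫ ω in {ω' | gbar ω' = v}, Δg ω ∂μ = 0 := by
        rw [← setIntegral_condExp hm hΔInt (hms v)]
        calc ∫ ω in {ω' | gbar ω' = v}, (μ[Δg|MeasurableSpace.comap gbar inferInstance]) ω ∂μ
            = ∫ ω in {ω' | gbar ω' = v},
                (0 : Ω → EuclideanSpace ℝ (Σ l : Fin L, Fin (ndim l) × Fin (ddim l))) ω ∂μ :=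
              integral_congr_ae (ae_restrict_of_ae hcond)
          _ = 0 := by simp
      rw [h0, inner_zero_right]
    · intro v _
      exact (hΔInt.const_inner v).indicator (hm _ (hms v))
  -- integrability of the squared pieces
  have hip : ∀ (f h : Ω → EuclideanSpace ℝ (Σ l : Fin L, Fin (ndim l) × Fin (ddim l))),
      MemLp f 2 μ → MemLp h 2 μ → Integrable (fun ω => ⟪f ω, h ω⟫) μ := by
    intro f h hf hh
    have h1 := MeasureTheory.L2.integrable_inner (𝕜 := ℝ) (hf.toLp f) (hh.toLp h)
    refine h1.congr ?_
    filter_upwards [hf.coeFn_toLp, hh.coeFn_toLp] with ω e1 e2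
    rw [e1, e2]
  have hint_gbar2 : Integrable (fun ω => ‖gbar ω‖ ^ 2) μ :=
    (hip _ _ hgbar2 hgbar2).congr (Filter.Eventually.of_forall fun ω =>
      real_inner_self_eq_norm_sq _)
  have hint_cross : Integrable (fun ω => ⟪gbar ω, Δg ω⟫) μ := hip _ _ hgbar2 hΔg2
  -- compression term
  have hnorm_sq : ∀ (v : EuclideanSpace ℝ (Σ l : Fin L, Fin (ndim l) × Fin (ddim l))),
      ‖v‖ ^ 2 = ∑ k, (v k) ^ 2 := by
    intro v
    rw [EuclideanSpace.norm_eq, Real.sq_sqrt (by positivity)]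
    exact Finset.sum_congr rfl fun k _ => by rw [Real.norm_eq_abs, sq_abs]
  have hΔnorm : ∀ ω, ‖Δg ω‖ ^ 2 = ((B : ℝ) ^ 2)⁻¹ * ∑ l, frobSq ((G l ω)ᵀ * ΔX l ω) := by
    intro ω
    rw [hnorm_sq, ← Finset.univ_sigma_univ, Finset.sum_sigma, Finset.mul_sum]
    refine Finset.sum_congr rfl fun l _ => ?_
    rw [Fintype.sum_prod_type, frobSq, Finset.mul_sum]
    refine Finset.sum_congr rfl fun i _ => ?_
    rw [Finset.mul_sum]
    refine Finset.sum_congr rfl fun j _ => ?_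
    rw [hΔg ω l i j, mul_pow]
    ring
  have hint_Δ2 : Integrable (fun ω => ‖Δg ω‖ ^ 2) μ := by
    have h1 : Integrable (fun ω => ((B : ℝ) ^ 2)⁻¹ * ∑ l, frobSq ((G l ω)ᵀ * ΔX l ω)) μ :=
      (integrable_finset_sum _ (fun l _ => hintl l)).const_mul _
    exact h1.congr (Filter.Eventually.of_forall fun ω => (hΔnorm ω).symm)
  have hIΔ : ∫ ω, ‖Δg ω‖ ^ 2 ∂μ
      = ((B : ℝ) ^ 2)⁻¹ * ∑ l, ∫ ω, frobSq ((G l ω)ᵀ * ΔX l ω) ∂μ := by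
    simp_rw [hΔnorm]
    rw [integral_const_mul, integral_finset_sum _ (fun l _ => hintl l)]
  -- sampling weights
  have hw0 : ∀ s : Finset (Fin N), s ∉ P → μ {ω | S ω = s} = 0 := by
    intro s hs
    have he : {ω | S ω = s} = ∅ :=
      Set.eq_empty_iff_forall_notMem.2 fun ω (h : S ω = s) =>
        hs (hP ▸ Finset.mem_powersetCard_univ.2 (h ▸ hScard ω))
    rw [he, measure_empty]
  have hwP : ∀ s ∈ P, (μ {ω | S ω = s}).toReal = ((N.choose B : ℕ) : ℝ)⁻¹ := by
    intro s hs
    rw [hSunif s (hP ▸ hs), one_div, ENNReal.toReal_inv, ENNReal.toReal_natCast]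
  -- sum identities
  have hsum1 : ∑ s ∈ P, ∑ i ∈ s, x i = c₁ • (∑ i, x i) := by
    calc ∑ s ∈ P, ∑ i ∈ s, x i
        = ∑ s ∈ P, ∑ i, (if i ∈ s then x i else 0) := by
          exact Finset.sum_congr rfl fun s _ => (Fintype.sum_ite_mem s x).symm
      _ = ∑ i, ∑ s ∈ P, (if i ∈ s then x i else 0) := Finset.sum_comm
      _ = ∑ i, (P.filter (fun s => i ∈ s)).card • x i := by
          refine Finset.sum_congr rfl fun i _ => ?_
          rw [← Finset.sum_filter, Finset.sum_const]
      _ = ∑ i, c₁ • x i := by simp_rw [hcount1]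
      _ = c₁ • ∑ i, x i := (Finset.smul_sum).symm
  have hkey : ∑ s ∈ P, ‖∑ i ∈ s, x i‖ ^ 2
      = (c₁ : ℝ) * (∑ i, ‖x i‖ ^ 2)
        + (c₂ : ℝ) * (‖∑ i, x i‖ ^ 2 - ∑ i, ‖x i‖ ^ 2) := by
    have hexp : ∀ s : Finset (Fin N), ‖∑ i ∈ s, x i‖ ^ 2
        = ∑ i, ∑ j, (if i ∈ s ∧ j ∈ s then ⟪x i, x j⟫ else 0) := by
      intro s
      rw [← real_inner_self_eq_norm_sq, sum_inner,
        ← Fintype.sum_ite_mem s (fun i => ⟪x i, ∑ j ∈ s, x j⟫)]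
      refine Finset.sum_congr rfl fun i _ => ?_
      by_cases hi : i ∈ s
      · simp only [hi, if_true, true_and]
        rw [inner_sum, ← Fintype.sum_ite_mem s (fun j => ⟪x i, x j⟫)]
      · simp [hi]
    calc ∑ s ∈ P, ‖∑ i ∈ s, x i‖ ^ 2
        = ∑ s ∈ P, ∑ i, ∑ j, (if i ∈ s ∧ j ∈ s then ⟪x i, x j⟫ else 0) :=
          Finset.sum_congr rfl fun s _ => hexp s
      _
        = ∑ i, ∑ s ∈ P, ∑ j, (if i ∈ s ∧ j ∈ s then ⟪x i, x j⟫ else 0) := Finset.sum_comm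
      _ = ∑ i, ∑ j, ∑ s ∈ P, (if i ∈ s ∧ j ∈ s then ⟪x i, x j⟫ else 0) :=
          Finset.sum_congr rfl fun i _ => Finset.sum_comm
      _ = ∑ i, ∑ j, ((P.filter (fun s => i ∈ s ∧ j ∈ s)).card : ℝ) * ⟪x i, x j⟫ := by
          refine Finset.sum_congr rfl fun i _ => Finset.sum_congr rfl fun j _ => ?_
          rw [← Finset.sum_filter, Finset.sum_const, nsmul_eq_mul]
      _ = ∑ i, ((c₁ : ℝ) * ⟪x i, x i⟫
            + (c₂ : ℝ) * ((∑ j, ⟪x i, x j⟫) - ⟪x i, x i⟫)) := by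
          refine Finset.sum_congr rfl fun i _ => ?_
          rw [← Finset.add_sum_erase _ _ (Finset.mem_univ i)]
          have hd : P.filter (fun s => i ∈ s ∧ i ∈ s) = P.filter (fun s => i ∈ s) := by
            apply Finset.filter_congr
            intro s _
            simp
          rw [hd, hcount1 i]
          have he : ∑ j ∈ Finset.univ.erase i,
              ((P.filter (fun s => i ∈ s ∧ j ∈ s)).card : ℝ) * ⟪x i, x j⟫
              = (c₂ : ℝ) * ∑ j ∈ Finset.univ.erase i, ⟪x i, x j⟫ := by
            rw [Finset.mul_sum]
            refine Finset.sum_congr rfl fun j hj => ?_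
            rw [hcount2 i j (Ne.symm (Finset.ne_of_mem_erase hj))]
          rw [he, Finset.sum_erase_eq_sub (Finset.mem_univ i)]
      _ = (c₁ : ℝ) * (∑ i, ‖x i‖ ^ 2)
            + (c₂ : ℝ) * (‖∑ i, x i‖ ^ 2 - ∑ i, ‖x i‖ ^ 2) := by
          rw [Finset.sum_add_distrib, ← Finset.mul_sum, ← Finset.mul_sum]
          congr 1
          · congr 1
            exact Finset.sum_congr rfl fun i _ => real_inner_self_eq_norm_sq _
          · congr 1
            rw [Finset.sum_sub_distrib]
            congr 1
            · calc ∑ i, ∑ j, ⟪x i, x j⟫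
                  = ∑ i, ⟪x i, ∑ j, x j⟫ :=
                    Finset.sum_congr rfl fun i _ => (inner_sum _ _ _).symm
                _ = ⟪∑ i, x i, ∑ j, x j⟫ := (sum_inner _ _ _).symm
                _ = ‖∑ i, x i‖ ^ 2 := real_inner_self_eq_norm_sq _
            · exact Finset.sum_congr rfl fun i _ => real_inner_self_eq_norm_sq _
  -- mean of gbar
  have hEgbar : ∫ ω, gbar ω ∂μ = μpop := by
    have h1 : gbar = fun ω => (fun s : Finset (Fin N) => (B : ℝ)⁻¹ • ∑ i ∈ s, x i) (S ω) :=
      funext hgbar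
    rw [h1, integral_comp_fiber μ S hSmeas,
      ← Finset.sum_subset (Finset.subset_univ P)
        (fun s _ hs => by rw [hw0 s hs]; simp)]
    have h2 : ∑ s ∈ P, (μ {ω | S ω = s}).toReal • ((B : ℝ)⁻¹ • ∑ i ∈ s, x i)
        = (((N.choose B : ℕ) : ℝ)⁻¹ * (B : ℝ)⁻¹) • ∑ s ∈ P, ∑ i ∈ s, x i := by
      rw [Finset.smul_sum]
      exact Finset.sum_congr rfl fun s hs => by rw [hwP s hs, smul_smul]
    rw [h2, hsum1, ← Nat.cast_smul_eq_nsmul ℝ, smul_smul, hμpop]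
    congr 1
    rw [hc1R]
    field_simp
  -- second moment of gbar
  have hIgbar : ∫ ω, ‖gbar ω‖ ^ 2 ∂μ
      = ((N.choose B : ℕ) : ℝ)⁻¹ * ((B : ℝ)⁻¹) ^ 2
        * ((c₁ : ℝ) * (∑ i, ‖x i‖ ^ 2)
          + (c₂ : ℝ) * (‖∑ i, x i‖ ^ 2 - ∑ i, ‖x i‖ ^ 2)) := by
    have h1 : (fun ω => ‖gbar ω‖ ^ 2)
        = fun ω => (fun s : Finset (Fin N) => ‖(B : ℝ)⁻¹ • ∑ i ∈ s, x i‖ ^ 2) (S ω) := by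
      funext ω
      rw [hgbar ω]
    have hfib := integral_comp_fiber μ S hSmeas
      (fun s : Finset (Fin N) => ‖(B : ℝ)⁻¹ • ∑ i ∈ s, x i‖ ^ 2)
    rw [h1, hfib,
      ← Finset.sum_subset (Finset.subset_univ P)
        (fun s _ hs => by rw [hw0 s hs]; simp)]
    have h2 : ∀ s : Finset (Fin N), ‖(B : ℝ)⁻¹ • ∑ i ∈ s, x i‖ ^ 2
        = ((B : ℝ)⁻¹) ^ 2 * ‖∑ i ∈ s, x i‖ ^ 2 := by
      intro s
      rw [norm_smul, mul_pow, Real.norm_eq_abs, abs_of_nonneg (by positivity)]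
    calc ∑ s ∈ P, (μ {ω | S ω = s}).toReal • ‖(B : ℝ)⁻¹ • ∑ i ∈ s, x i‖ ^ 2
        = ∑ s ∈ P, ((N.choose B : ℕ) : ℝ)⁻¹ * ((B : ℝ)⁻¹) ^ 2 * ‖∑ i ∈ s, x i‖ ^ 2 := by
          refine Finset.sum_congr rfl fun s hs => ?_
          rw [hwP s hs, smul_eq_mul, h2, mul_assoc]
      _ = ((N.choose B : ℕ) : ℝ)⁻¹ * ((B : ℝ)⁻¹) ^ 2 * ∑ s ∈ P, ‖∑ i ∈ s, x i‖ ^ 2 := by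
          rw [Finset.mul_sum]
      _ = _ := by rw [hkey]
  -- norm of population mean
  have hμnorm : ‖μpop‖ ^ 2 = ((N : ℝ)⁻¹) ^ 2 * ‖∑ i, x i‖ ^ 2 := by
    rw [hμpop, norm_smul, mul_pow, Real.norm_eq_abs, abs_of_nonneg (by positivity)]
  -- population variance identity
  have hD : ∑ i, ‖x i - μpop‖ ^ 2
      = (∑ i, ‖x i‖ ^ 2) - (N : ℝ)⁻¹ * ‖∑ i, x i‖ ^ 2 := by
    have h1 : ∀ i : Fin N, ‖x i - μpop‖ ^ 2
        = ‖x i‖ ^ 2 - 2 * ⟪x i, μpop⟫ + ‖μpop‖ ^ 2 := fun i => norm_sub_sq_real _ _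
    rw [Finset.sum_congr rfl (fun i _ => h1 i), Finset.sum_add_distrib,
      Finset.sum_sub_distrib, Finset.sum_const, Finset.card_univ, Fintype.card_fin]
    have h2 : ∑ i, 2 * ⟪x i, μpop⟫ = 2 * ((N : ℝ)⁻¹ * ‖∑ i, x i‖ ^ 2) := by
      rw [← Finset.mul_sum, ← sum_inner, hμpop, real_inner_smul_right,
        real_inner_self_eq_norm_sq]
    rw [h2, nsmul_eq_mul, hμnorm]
    field_simp
    ring
  -- splitting the second moment of g
  have hnormg : ∀ ω, ‖g ω‖ ^ 2 = ‖gbar ω‖ ^ 2 + 2 * ⟪gbar ω, Δg ω⟫ + ‖Δg ω‖ ^ 2 := by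
    intro ω
    rw [hg ω, norm_add_sq_real]
  have hsplit : ∫ ω, ‖g ω‖ ^ 2 ∂μ
      = (∫ ω, ‖gbar ω‖ ^ 2 ∂μ) + 2 * (∫ ω, ⟪gbar ω, Δg ω⟫ ∂μ)
        + ∫ ω, ‖Δg ω‖ ^ 2 ∂μ := by
    have hint_cross2 : Integrable (fun ω => 2 * ⟪gbar ω, Δg ω⟫) μ := hint_cross.const_mul 2
    have hint_sum : Integrable (fun ω => ‖gbar ω‖ ^ 2 + 2 * ⟪gbar ω, Δg ω⟫) μ :=
      hint_gbar2.add hint_cross2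
    simp_rw [hnormg]
    rw [integral_add hint_sum hint_Δ2, integral_add hint_gbar2 hint_cross2, integral_const_mul]
  have hEg : ∫ ω, g ω ∂μ = μpop := by
    have h1 : g = fun ω => gbar ω + Δg ω := funext hg
    rw [h1, integral_add hgbarInt hΔInt, hEgbar, hΔzero, add_zero]
  -- final assembly
  rw [hsplit, hcross, hIgbar, hIΔ, hEg, hμnorm, hH, hD]
  apply le_of_eq
  rw [hc1R, hc2R]
  field_simp
  ring
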